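/- arXiv:1412.5761 — 2 statements merged into one kernel-verified Lean document; each statement's English description precedes it below -/
import Mathlib

section
/- Let X and Y be Banach spaces over ℝ. If the continuous dual X' (with the operator norm) has the Schur property and Y has the Schur property, then every bounded linear operator T : X → Y is a compact operator. -/
open Filter Topology

section Defs

variable {E : Type*} [NormedAddCommGroup E] [NormedSpace ℝ E]
variable {F : Type*} [NormedAddCommGroup F] [NormedSpace ℝ F]

/-- A sequence converges weakly to `x₀`. -/
def WeakConvTo (x : ℕ → E) (x₀ : E) : Prop :=
  ∀ f : E →L[ℝ] ℝ, Tendsto (fun n => f (x n)) atTop (𝓝 (f x₀))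

/-- A sequence is weakly Cauchy. -/
def WeaklyCauchySeq (x : ℕ → E) : Prop :=
  ∀ f : E →L[ℝ] ℝ, ∃ L : ℝ, Tendsto (fun n => f (x n)) atTop (𝓝 L)

/-- Every bounded sequence has a weakly Cauchy subsequence. -/
def AlmostReflexive (E : Type*) [NormedAddCommGroup E] [NormedSpace ℝ E] : Prop :=
  ∀ x : ℕ → E, (∃ C : ℝ, ∀ n, ‖x n‖ ≤ C) →
    ∃ φ : ℕ → ℕ, StrictMono φ ∧ WeaklyCauchySeq (x ∘ φ)

/-- Every weakly convergent sequence converges in norm. -/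
def SchurProperty (E : Type*) [NormedAddCommGroup E] [NormedSpace ℝ E] : Prop :=
  ∀ (x : ℕ → E) (x₀ : E), WeakConvTo x x₀ → Tendsto x atTop (𝓝 x₀)

/-- Sequential reflexivity: every bounded sequence has a weakly convergent subsequence. -/
def SeqReflexive (E : Type*) [NormedAddCommGroup E] [NormedSpace ℝ E] : Prop :=
  ∀ x : ℕ → E, (∃ C : ℝ, ∀ n, ‖x n‖ ≤ C) →
    ∃ φ : ℕ → ℕ, StrictMono φ ∧ ∃ x₀ : E, WeakConvTo (x ∘ φ) x₀

/-- Every weakly Cauchy sequence converges weakly. -/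
def WeaklySeqComplete (E : Type*) [NormedAddCommGroup E] [NormedSpace ℝ E] : Prop :=
  ∀ x : ℕ → E, WeaklyCauchySeq x → ∃ x₀ : E, WeakConvTo x x₀

/-- No infinite-dimensional closed subspace is (sequentially) reflexive. -/
def VeryIrreflexive (E : Type*) [NormedAddCommGroup E] [NormedSpace ℝ E] : Prop :=
  ∀ X₀ : Subspace ℝ E, IsClosed (X₀ : Set E) → ¬FiniteDimensional ℝ X₀ →
    ¬SeqReflexive X₀

/-- A strictly singular bounded operator: on no infinite-dimensional closed subspace is it
an isomorphism onto its image. -/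
def StrictlySingular (T : E →L[ℝ] F) : Prop :=
  ∀ X₀ : Subspace ℝ E, IsClosed (X₀ : Set E) → ¬FiniteDimensional ℝ X₀ →
    ¬∃ c : ℝ, 0 < c ∧ ∀ x ∈ X₀, c * ‖x‖ ≤ ‖T x‖

/-- A weakly compact operator. -/
def WeaklyCompactOp (T : E →L[ℝ] F) : Prop :=
  ∀ x : ℕ → E, (∃ C : ℝ, ∀ n, ‖x n‖ ≤ C) →
    ∃ φ : ℕ → ℕ, StrictMono φ ∧ ∃ y : F, WeakConvTo (fun n => T (x (φ n))) y

/-- A completely continuous operator maps weakly convergent sequences to norm convergent ones. -/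
def CompletelyContinuousOp (T : E →L[ℝ] F) : Prop :=
  ∀ (x : ℕ → E) (x₀ : E), WeakConvTo x x₀ → ∃ y : F, Tendsto (fun n => T (x n)) atTop (𝓝 y)

/-- The image of the closed unit ball is relatively compact in norm. -/
def CompactOp (T : E →L[ℝ] F) : Prop :=
  IsCompact (closure (⇑T '' Metric.closedBall (0 : E) 1))

/-- The Dunford–Pettis property. -/
def DunfordPettisProp (E : Type*) [NormedAddCommGroup E] [NormedSpace ℝ E] : Prop :=
  ∀ (Z : Type*) [NormedAddCommGroup Z] [NormedSpace ℝ Z] [CompleteSpace Z],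
    ∀ T : E →L[ℝ] Z, WeaklyCompactOp T → CompletelyContinuousOp T

/-- The reciprocal Dunford–Pettis property. -/
def ReciprocalDunfordPettisProp (E : Type*) [NormedAddCommGroup E] [NormedSpace ℝ E] : Prop :=
  ∀ (Z : Type*) [NormedAddCommGroup Z] [NormedSpace ℝ Z] [CompleteSpace Z],
    ∀ T : E →L[ℝ] Z, CompletelyContinuousOp T → WeaklyCompactOp T

/-- The Dieudonné property. -/
def DieudonneProp (E : Type*) [NormedAddCommGroup E] [NormedSpace ℝ E] : Prop :=
  ∀ (Z : Type*) [NormedAddCommGroup Z] [NormedSpace ℝ Z] [CompleteSpace Z],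
    ∀ T : E →L[ℝ] Z,
      (∀ x : ℕ → E, WeaklyCauchySeq x → ∃ y : Z, WeakConvTo (fun n => T (x n)) y) →
      WeaklyCompactOp T

/-- A Grothendieck space: weak*-convergent sequences in the dual converge weakly. -/
def GrothendieckSpace (E : Type*) [NormedAddCommGroup E] [NormedSpace ℝ E] : Prop :=
  ∀ (f : ℕ → (E →L[ℝ] ℝ)) (g : E →L[ℝ] ℝ),
    (∀ x : E, Tendsto (fun n => f n x) atTop (𝓝 (g x))) →
    ∀ F : (E →L[ℝ] ℝ) →L[ℝ] ℝ, Tendsto (fun n => F (f n)) atTop (𝓝 (F g))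

/-- The Banach space ℓ¹ of absolutely summable real sequences. -/
abbrev EllOne : Type := lp (fun _ : ℕ => ℝ) 1

/-- Quasi-reflexive: the canonical image of `E` in its bidual has finite codimension. -/
def QuasiReflexive (E : Type*) [NormedAddCommGroup E] [NormedSpace ℝ E] : Prop :=
  FiniteDimensional ℝ
    ((StrongDual ℝ (StrongDual ℝ E)) ⧸
      LinearMap.range (NormedSpace.inclusionInDoubleDual ℝ E).toLinearMap)

/-- Hereditarily-ℓ¹: every infinite-dimensional closed subspace contains a closed subspace
topologically isomorphic to ℓ¹. -/
def HereditarilyEllOne (E : Type*) [NormedAddCommGroup E] [NormedSpace ℝ E] : Prop :=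
  ∀ X₀ : Subspace ℝ E, IsClosed (X₀ : Set E) → ¬FiniteDimensional ℝ X₀ →
    ∃ Z : Subspace ℝ E, Z ≤ X₀ ∧ IsClosed (Z : Set E) ∧ Nonempty (Z ≃L[ℝ] EllOne)

end Defs

/-!
By Rosenthal's dichotomy, a bounded sequence in a normed space has either a weakly Cauchy
subsequence, or a subsequence `(y i)` and levels `r < s` such that for all disjoint finite `P, Q`
some functional of norm `≤ 1` is `> s` on `P` and `< r` on `Q`. In the second case, averaging
these functionals against Rademacher signs and passing to a weak-* cluster point gives `g j` with
`g j (y j) ≥ (s - r) / 2` and `‖∑ a j • g j‖ ≤ √(∑ a j ^ 2)`; the latter makes `(g j)` weakly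
null, so the Schur property of `X'` forces `‖g j‖ → 0`, a contradiction. Hence bounded sequences
in `X` have weakly Cauchy subsequences, `T` maps them to weakly Cauchy sequences in `Y`, and these
are norm Cauchy by the Schur property of `Y`: the image of the unit ball is totally bounded.
-/

open Set

section Fusion

theorem exists_strictMono_fusion {C : Set ℕ} (hC : C.Infinite) {p : ℕ → ℕ → Set ℕ → Prop}
    (h : ∀ k, ∀ n ∈ C, ∀ M ⊆ C ∩ Ioi n, M.Infinite → ∃ M' ⊆ M, M'.Infinite ∧ p k n M') :
    ∃ m : ℕ → ℕ, StrictMono m ∧ (∀ k, m k ∈ C) ∧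
      ∀ k, ∃ M, p k (m k) M ∧ ∀ j, k < j → m j ∈ M := by
  have next : ∀ k (M : {M : Set ℕ // M ⊆ C ∧ M.Infinite}), ∃ n ∈ M.1,
      ∃ M' : {M : Set ℕ // M ⊆ C ∧ M.Infinite}, M'.1 ⊆ M.1 ∩ Ioi n ∧ p k n M'.1 := by
    rintro k ⟨M, hMC, hM⟩
    obtain ⟨n, hn⟩ := hM.nonempty
    have hMn : (M ∩ Ioi n).Infinite :=
      (hM.sdiff (finite_Iic n)).mono fun x hx => ⟨hx.1, by simpa using hx.2⟩
    obtain ⟨M', hM', hM'inf, hp⟩ := h k n (hMC hn) (M ∩ Ioi n)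
      (inter_subset_inter_left _ hMC) hMn
    exact ⟨n, hn, ⟨M', fun x hx => hMC (hM' hx).1, hM'inf⟩, hM', hp⟩
  choose n hn M' hM' hp using next
  let M : ℕ → {M : Set ℕ // M ⊆ C ∧ M.Infinite} :=
    fun k => Nat.rec ⟨C, subset_rfl, hC⟩ (fun k Mk => M' k Mk) k
  have hM_succ : ∀ k, (M (k + 1)).1 ⊆ (M k).1 ∩ Ioi (n k (M k)) := fun k => hM' k (M k)
  have hM_anti : Antitone fun k => (M k).1 :=
    antitone_nat_of_succ_le fun k => (hM_succ k).trans inter_subset_left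
  refine ⟨fun k => n k (M k), strictMono_nat_of_lt_succ fun k => ?_,
    fun k => (M k).2.1 (hn k (M k)), fun k => ⟨(M (k + 1)).1, hp k (M k), fun j hkj => ?_⟩⟩
  · exact (hM_succ k (hn (k + 1) (M (k + 1)))).2
  · exact hM_anti hkj (hn j (M j))

variable {α : Type*} (S : ℕ → Bool → Set α)

def pattern (F : Finset ℕ) (ε : ℕ → Bool) : Set α :=
  {a | ∀ n ∈ F, a ∈ S n (ε n)}

def Oscillates (D : Set α) (C : Set ℕ) : Prop :=
  ∃ a ∈ D, ∀ b, {n | n ∈ C ∧ a ∈ S n b}.Infinite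

def PatternsOscillate (F : Finset ℕ) (C : Set ℕ) : Prop :=
  ∀ ε, ∀ C' ⊆ C, C'.Infinite → Oscillates S (pattern S F ε) C'

variable {S}

theorem PatternsOscillate.exists_insert {F : Finset ℕ} {C : Set ℕ} (hC : C.Infinite)
    (hF : PatternsOscillate S F C) :
    ∃ n ∈ C, ∃ C' ⊆ C ∩ Ioi n, C'.Infinite ∧ PatternsOscillate S (insert n F) C' := by
  classical
  -- Otherwise each `n ∈ C` has a pattern whose extension by `n` stops oscillating on some subset
  -- of `C`. Fusing these choices and fixing the pattern along infinitely many of the chosen `m k`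
  -- contradicts the oscillation of `pattern S F` along `{m k}`.
  by_contra! hcon
  obtain ⟨m, hm, hmC, hM⟩ := exists_strictMono_fusion hC
    (p := fun _ n M => ∃ ε, ¬Oscillates S (pattern S (insert n F) ε) M) fun _ n hn M hM hMinf => by
      have hM' := hcon n hn M hM hMinf
      simp only [PatternsOscillate] at hM'
      push Not at hM'
      obtain ⟨ε, C', hC'M, hC', hosc⟩ := hM'
      exact ⟨C', hC'M, hC', ε, hosc⟩
  choose M hε hmM using hM
  choose ε hε using hε
  obtain ⟨⟨τ, b⟩, hJ⟩ := Finite.exists_infinite_fiber fun k => (F.restrict (ε k), ε k (m k))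
  set J := (fun k => (F.restrict (ε k), ε k (m k))) ⁻¹' {(τ, b)}
  have hJ : J.Infinite := infinite_coe_iff.1 hJ
  obtain ⟨k₀, hk₀⟩ := hJ.nonempty
  obtain ⟨a, haF, ha⟩ := hF (ε k₀) (m '' J) (by rintro _ ⟨k, -, rfl⟩; exact hmC k)
    (hJ.image hm.injective.injOn)
  obtain ⟨_, ⟨k, hk, rfl⟩, hak⟩ := (ha b).nonempty
  simp only [J, mem_preimage, mem_singleton_iff, Prod.mk.injEq] at hk hk₀
  refine hε k ⟨a, fun i hi => ?_, fun b' => ?_⟩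
  · rcases Finset.mem_insert.1 hi with rfl | hiF
    · rwa [hk.2]
    · have hεi := congrFun (hk.1.trans hk₀.1.symm) ⟨i, hiF⟩
      simp only [Finset.restrict] at hεi
      rw [hεi]; exact haF i hiF
  · refine ((ha b').sdiff (finite_Iic (m k))).mono ?_
    rintro _ ⟨⟨⟨j, -, rfl⟩, haj⟩, hjk⟩
    exact ⟨hmM k j (hm.lt_iff_lt.1 (not_le.1 hjk)), haj⟩

theorem exists_strictMono_independent_of_oscillates {M : Set ℕ} (hM : M.Infinite)
    (hosc : ∀ C ⊆ M, C.Infinite → Oscillates S univ C) :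
    ∃ φ : ℕ → ℕ, StrictMono φ ∧ ∀ F ε, (pattern (fun n => S (φ n)) F ε).Nonempty := by
  let State := {p : Finset ℕ × Set ℕ // PatternsOscillate S p.1 p.2 ∧ p.2.Infinite}
  have next : ∀ p : State, ∃ n ∈ p.1.2, ∃ q : State,
      q.1.1 = insert n p.1.1 ∧ q.1.2 ⊆ p.1.2 ∩ Ioi n := by
    rintro ⟨⟨F, C⟩, hF, hC⟩
    obtain ⟨n, hn, C', hC', hC'inf, hF'⟩ := hF.exists_insert hC
    exact ⟨n, hn, ⟨(insert n F, C'), hF', hC'inf⟩, rfl, hC'⟩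
  choose n hn q hqF hqC using next
  have base : PatternsOscillate S ∅ M := fun ε C' hC'M hC' => by
    simpa [pattern] using hosc C' hC'M hC'
  let st : ℕ → State := fun k => Nat.rec ⟨(∅, M), base, hM⟩ (fun _ p => q p) k
  have hst_succ : ∀ k, (st (k + 1)).1.1 = insert (n (st k)) (st k).1.1 := fun k => hqF (st k)
  have hst_mono : Monotone fun k => (st k).1.1 := monotone_nat_of_le_succ fun k => by
    simp only [hst_succ]; exact Finset.subset_insert _ _
  have hφ : StrictMono fun k => n (st k) := strictMono_nat_of_lt_succ fun k =>
    (hqC (st k) (hn (st (k + 1)))).2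
  refine ⟨fun k => n (st k), hφ, fun F ε => ?_⟩
  classical
  obtain ⟨K, hK⟩ := F.exists_nat_subset_range
  obtain ⟨a, ha, -⟩ := (st K).2.1 (Function.extend (fun k => n (st k)) ε fun _ => true)
    (st K).1.2 subset_rfl (st K).2.2
  refine ⟨a, fun i hi => ?_⟩
  have hiK : n (st i) ∈ (st K).1.1 := hst_mono (Finset.mem_range.1 (hK hi)) <| by
    show n (st i) ∈ (st (i + 1)).1.1
    rw [hst_succ]; exact Finset.mem_insert_self _ _
  simpa only [hφ.injective.extend_apply] using ha _ hiK

end Fusion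

section Rosenthal

variable {K : Type*}

def gapSides (r s : ℝ) (u : ℕ → K → ℝ) (n : ℕ) : Bool → Set K
  | true => {k | s < u n k}
  | false => {k | u n k < r}

theorem exists_rat_frequently_lt_and_frequently_gt {t : ℕ → ℝ} (ht : ∃ R, ∀ n, |t n| ≤ R)
    (hnt : ¬∃ L, Tendsto t atTop (𝓝 L)) :
    ∃ r s : ℚ, (r : ℝ) < s ∧ (∃ᶠ n in atTop, t n < r) ∧ ∃ᶠ n in atTop, s < t n := by
  obtain ⟨R, hR⟩ := ht
  have hle : IsBoundedUnder (· ≤ ·) atTop t :=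
    isBoundedUnder_of ⟨R, fun n => (abs_le.1 (hR n)).2⟩
  have hge : IsBoundedUnder (· ≥ ·) atTop t :=
    isBoundedUnder_of ⟨-R, fun n => (abs_le.1 (hR n)).1⟩
  have hlt : liminf t atTop < limsup t atTop := (liminf_le_limsup hle hge).lt_of_ne
    fun h => hnt ⟨_, tendsto_of_liminf_eq_limsup h rfl hle hge⟩
  obtain ⟨r, hr1, hr2⟩ := exists_rat_btwn hlt
  obtain ⟨s, hs1, hs2⟩ := exists_rat_btwn hr2
  exact ⟨r, s, hs1, frequently_lt_of_liminf_lt hle.isCoboundedUnder_ge hr1,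
    frequently_lt_of_lt_limsup hge.isCoboundedUnder_le hs2⟩

theorem StrictMono.infinite_setOf_mem_and {m : ℕ → ℕ} (hm : StrictMono m) {M : Set ℕ} {i : ℕ}
    (hmM : ∀ j, i < j → m j ∈ M) {Q : ℕ → Prop} (hQ : ∃ᶠ j in atTop, Q (m j)) :
    {n | n ∈ M ∧ Q n}.Infinite := by
  rw [Nat.frequently_atTop_iff_infinite] at hQ
  refine ((hQ.sdiff (finite_Iic i)).image hm.injective.injOn).mono ?_
  rintro _ ⟨j, ⟨hj, hji⟩, rfl⟩
  exact ⟨hmM j (by simpa using hji), hj⟩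

theorem exists_strictMono_tendsto_or_independent (u : ℕ → K → ℝ)
    (hu : ∀ k, ∃ R, ∀ n, |u n k| ≤ R) :
    ∃ φ : ℕ → ℕ, StrictMono φ ∧ ((∀ k, ∃ L, Tendsto (fun n => u (φ n) k) atTop (𝓝 L)) ∨
      ∃ r s, r < s ∧ ∀ F ε, (pattern (gapSides r s fun n => u (φ n)) F ε).Nonempty) := by
  by_cases h : ∃ r s : ℚ, (r : ℝ) < s ∧ ∃ M : Set ℕ, M.Infinite ∧
      ∀ C ⊆ M, C.Infinite → Oscillates (gapSides r s u) univ C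
  · obtain ⟨r, s, hrs, M, hM, hosc⟩ := h
    obtain ⟨φ, hφ, hpat⟩ := exists_strictMono_independent_of_oscillates hM hosc
    exact ⟨φ, hφ, .inr ⟨r, s, hrs, hpat⟩⟩
  push Not at h
  -- Diagonalising over all rational gaps yields a subsequence along which no `k` oscillates
  -- across any rational gap, so every `u (m n) k` converges.
  obtain ⟨e, he⟩ := exists_surjective_nat (ℚ × ℚ)
  have hstep : ∀ (i : ℕ), ∀ n ∈ univ, ∀ M ⊆ univ ∩ Ioi n, M.Infinite → ∃ M' ⊆ M, M'.Infinite ∧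
      (((e i).1 : ℝ) < (e i).2 → ¬Oscillates (gapSides (e i).1 (e i).2 u) univ M') := by
    intro i _ _ M _ hM
    by_cases hrs : ((e i).1 : ℝ) < (e i).2
    · obtain ⟨C, hCM, hC, hnosc⟩ := h _ _ hrs M hM
      exact ⟨C, hCM, hC, fun _ => hnosc⟩
    · exact ⟨M, subset_rfl, hM, fun h => absurd h hrs⟩
  obtain ⟨m, hm, -, hM⟩ := exists_strictMono_fusion infinite_univ hstep
  refine ⟨m, hm, .inl fun k => ?_⟩
  by_contra hk
  obtain ⟨R, hR⟩ := hu k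
  obtain ⟨r, s, hrs, hlow, hhigh⟩ :=
    exists_rat_frequently_lt_and_frequently_gt ⟨R, fun n => hR (m n)⟩ hk
  obtain ⟨i, hi⟩ := he (r, s)
  obtain ⟨M, hnosc, hmM⟩ := hM i
  rw [hi] at hnosc
  refine hnosc hrs ⟨k, mem_univ k, fun b => ?_⟩
  cases b
  · exact hm.infinite_setOf_mem_and hmM hlow
  · exact hm.infinite_setOf_mem_and hmM hhigh

end Rosenthal

section WeaklyCauchy

variable {W : Type*} [NormedAddCommGroup W] [NormedSpace ℝ W]

theorem weaklyCauchySeq_of_forall_norm_le_one {y : ℕ → W}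
    (h : ∀ f : W →L[ℝ] ℝ, ‖f‖ ≤ 1 → ∃ L, Tendsto (fun n => f (y n)) atTop (𝓝 L)) :
    WeaklyCauchySeq y := by
  intro f
  have hc : 0 < ‖f‖ + 1 := by positivity
  obtain ⟨L, hL⟩ := h ((‖f‖ + 1)⁻¹ • f) <| by
    rw [norm_smul, norm_inv, Real.norm_of_nonneg hc.le, inv_mul_le_one₀ hc]
    exact le_add_of_nonneg_right zero_le_one
  refine ⟨(‖f‖ + 1) * L, ?_⟩
  convert hL.const_mul (‖f‖ + 1) using 2 with n
  simp [hc.ne']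

theorem exists_strictMono_weaklyCauchySeq_or_independent (y : ℕ → W)
    (hy : ∃ R, ∀ n, ‖y n‖ ≤ R) :
    ∃ φ : ℕ → ℕ, StrictMono φ ∧ (WeaklyCauchySeq (y ∘ φ) ∨
      ∃ r s, r < s ∧ ∀ P Q : Finset ℕ, Disjoint P Q → ∃ h : W →L[ℝ] ℝ, ‖h‖ ≤ 1 ∧
        (∀ i ∈ P, s < h (y (φ i))) ∧ ∀ i ∈ Q, h (y (φ i)) < r) := by
  obtain ⟨R, hR⟩ := hy
  obtain ⟨φ, hφ, hconv | ⟨r, s, hrs, hpat⟩⟩ := exists_strictMono_tendsto_or_independent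
    (K := Metric.closedBall (0 : W →L[ℝ] ℝ) 1) (fun n h => (h : W →L[ℝ] ℝ) (y n))
    fun h => ⟨R, fun n => ((h : W →L[ℝ] ℝ).le_opNorm (y n)).trans <|
      (mul_le_of_le_one_left (norm_nonneg _) (mem_closedBall_zero_iff.1 h.2)).trans (hR n)⟩
  · exact ⟨φ, hφ, .inl <| weaklyCauchySeq_of_forall_norm_le_one fun f hf =>
      hconv ⟨f, mem_closedBall_zero_iff.2 hf⟩⟩
  refine ⟨φ, hφ, .inr ⟨r, s, hrs, fun P Q hPQ => ?_⟩⟩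
  classical
  obtain ⟨⟨h, hh⟩, hpat⟩ := hpat (P ∪ Q) fun i => decide (i ∈ P)
  refine ⟨h, mem_closedBall_zero_iff.1 hh, fun i hi => ?_, fun i hi => ?_⟩
  · simpa [hi, gapSides] using hpat i (Finset.mem_union_left _ hi)
  · simpa [Finset.disjoint_right.1 hPQ hi, gapSides] using hpat i (Finset.mem_union_right _ hi)

end WeaklyCauchy

section Rademacher

variable {ι : Type*} [DecidableEq ι]

def rademacher (σ : Finset ι) (j : ι) : ℝ := if j ∈ σ then 1 else -1

theorem abs_rademacher (σ : Finset ι) (j : ι) : |rademacher σ j| = 1 := by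
  unfold rademacher; split_ifs <;> simp

theorem rademacher_mul_self (σ : Finset ι) (j : ι) : rademacher σ j * rademacher σ j = 1 := by
  unfold rademacher; split_ifs <;> norm_num

theorem sum_powerset_rademacher_mul_rademacher {s : Finset ι} {j : ι} (hj : j ∈ s) (k : ι) :
    ∑ σ ∈ s.powerset, rademacher σ j * rademacher σ k = if j = k then 2 ^ s.card else 0 := by
  split_ifs with hjk
  · subst hjk
    simp [rademacher_mul_self]
  -- flipping the sign of `j` is an involution of `s.powerset` that negates every summand
  refine Finset.sum_involution (fun σ _ => symmDiff σ {j}) (fun σ _ => ?_) (fun σ _ _ => ?_)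
    (fun σ hσ => ?_) fun σ _ => symmDiff_symmDiff_cancel_right _ _
  · by_cases hσ : j ∈ σ <;> simp [rademacher, Finset.mem_symmDiff, hσ, Ne.symm hjk] <;>
      split_ifs <;> norm_num
  · intro h
    have hjσ := congrArg (j ∈ ·) h
    by_cases hσ : j ∈ σ <;> simp_all
  · rw [Finset.mem_powerset] at hσ ⊢
    intro i hi
    rcases Finset.mem_symmDiff.1 hi with ⟨hi, -⟩ | ⟨hi, -⟩
    · exact hσ hi
    · rwa [Finset.mem_singleton.1 hi]

theorem sum_powerset_sq_sum_rademacher {s F : Finset ι} (hF : F ⊆ s) (a : ι → ℝ) :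
    ∑ σ ∈ s.powerset, (∑ j ∈ F, a j * rademacher σ j) ^ 2 = 2 ^ s.card * ∑ j ∈ F, a j ^ 2 := by
  have expand : ∀ σ : Finset ι, (∑ j ∈ F, a j * rademacher σ j) ^ 2 =
      ∑ j ∈ F, ∑ k ∈ F, a j * a k * (rademacher σ j * rademacher σ k) := fun σ => by
    rw [sq, Finset.sum_mul_sum]
    exact Finset.sum_congr rfl fun j _ => Finset.sum_congr rfl fun k _ => by ring
  calc ∑ σ ∈ s.powerset, (∑ j ∈ F, a j * rademacher σ j) ^ 2
      = ∑ j ∈ F, ∑ k ∈ F, a j * a k *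
          ∑ σ ∈ s.powerset, rademacher σ j * rademacher σ k := by
        simp_rw [expand, Finset.mul_sum]
        rw [Finset.sum_comm]
        exact Finset.sum_congr rfl fun j _ => Finset.sum_comm
    _ = 2 ^ s.card * ∑ j ∈ F, a j ^ 2 := by
        rw [Finset.mul_sum]
        refine Finset.sum_congr rfl fun j hj => ?_
        simp only [sum_powerset_rademacher_mul_rademacher (hF hj), mul_ite, mul_zero,
          Finset.sum_ite_eq, if_pos hj]
        ring

end Rademacher

section RademacherAverage

open Finset

variable {V : Type*} [NormedAddCommGroup V] [NormedSpace ℝ V]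

noncomputable def rademacherAverage (c : Finset ℕ → V) (N j : ℕ) : V :=
  (2 ^ N : ℝ)⁻¹ • ∑ σ ∈ (range N).powerset, rademacher σ j • c σ

theorem norm_average_smul_le {c : Finset ℕ → V} (hc : ∀ σ, ‖c σ‖ ≤ 1) (N : ℕ)
    (w : Finset ℕ → ℝ) :
    ‖(2 ^ N : ℝ)⁻¹ • ∑ σ ∈ (range N).powerset, w σ • c σ‖ ≤
      (2 ^ N : ℝ)⁻¹ * ∑ σ ∈ (range N).powerset, |w σ| := by
  rw [norm_smul, Real.norm_of_nonneg (by positivity)]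
  gcongr
  refine (norm_sum_le _ _).trans (sum_le_sum fun σ _ => ?_)
  rw [norm_smul, Real.norm_eq_abs]
  exact mul_le_of_le_one_right (abs_nonneg _) (hc σ)

theorem norm_rademacherAverage_le {c : Finset ℕ → V} (hc : ∀ σ, ‖c σ‖ ≤ 1) (N j : ℕ) :
    ‖rademacherAverage c N j‖ ≤ 1 := by
  refine (norm_average_smul_le hc N _).trans_eq ?_
  simp [abs_rademacher]

theorem norm_sum_smul_rademacherAverage_le {c : Finset ℕ → V} (hc : ∀ σ, ‖c σ‖ ≤ 1)
    {F : Finset ℕ} {N : ℕ} (hF : F ⊆ range N) (a : ℕ → ℝ) :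
    ‖∑ j ∈ F, a j • rademacherAverage c N j‖ ≤ √(∑ j ∈ F, a j ^ 2) := by
  set x : Finset ℕ → ℝ := fun σ => ∑ j ∈ F, a j * rademacher σ j
  have hsum : ∑ j ∈ F, a j • rademacherAverage c N j =
      (2 ^ N : ℝ)⁻¹ • ∑ σ ∈ (range N).powerset, x σ • c σ := by
    simp only [rademacherAverage, x, smul_sum, sum_smul, smul_smul]
    rw [sum_comm]
    exact sum_congr rfl fun σ _ => sum_congr rfl fun j _ => by ring_nf
  -- Cauchy–Schwarz, then orthogonality of the Rademacher signs
  have hx : ∑ σ ∈ (range N).powerset, |x σ| ≤ 2 ^ N * √(∑ j ∈ F, a j ^ 2) := by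
    have hcs := sq_sum_le_card_mul_sum_sq (s := (range N).powerset) (f := fun σ => |x σ|)
    simp only [sq_abs, x, sum_powerset_sq_sum_rademacher hF, card_powerset, card_range] at hcs
    rw [← Real.sqrt_sq (by positivity : (0 : ℝ) ≤ 2 ^ N), ← Real.sqrt_mul (by positivity)]
    refine Real.le_sqrt_of_sq_le (hcs.trans_eq ?_)
    push_cast; ring
  rw [hsum]
  refine (norm_average_smul_le hc N x).trans ?_
  rwa [inv_mul_le_iff₀ (by positivity)]

theorem le_rademacherAverage_apply {W : Type*} [NormedAddCommGroup W] [NormedSpace ℝ W]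
    {c : Finset ℕ → W →L[ℝ] ℝ} {β : ℝ} {N j : ℕ} {w : W}
    (hc : ∀ σ, β ≤ rademacher σ j * c σ w) :
    β ≤ rademacherAverage c N j w := by
  have hle := sum_le_sum fun σ (_ : σ ∈ (range N).powerset) => hc σ
  simp only [sum_const, card_powerset, card_range, nsmul_eq_mul] at hle
  simp only [rademacherAverage, smul_apply, _root_.sum_apply, smul_eq_mul]
  rw [le_inv_mul_iff₀ (by positivity)]
  exact_mod_cast hle

end RademacherAverage

section DualSequence

open Finset

variable {W : Type*} [NormedAddCommGroup W] [NormedSpace ℝ W]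

theorem weakConvTo_zero_of_norm_sum_smul_le {v : ℕ → W} {C : ℝ}
    (hv : ∀ n (a : ℕ → ℝ), ‖∑ j ∈ range n, a j • v j‖ ≤ C * √(∑ j ∈ range n, a j ^ 2)) :
    WeakConvTo v 0 := by
  intro Φ
  rw [map_zero]
  -- testing the estimate against the coefficients `a j = Φ (v j)` bounds their squares
  have hbdd : ∀ n, ∑ j ∈ range n, Φ (v j) ^ 2 ≤ (‖Φ‖ * C) ^ 2 := fun n => by
    set S := ∑ j ∈ range n, Φ (v j) ^ 2
    have hS : S ≤ ‖Φ‖ * C * √S := by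
      calc S = Φ (∑ j ∈ range n, Φ (v j) • v j) := by simp [S, map_sum, sq]
        _ ≤ ‖Φ‖ * ‖∑ j ∈ range n, Φ (v j) • v j‖ := (le_abs_self _).trans (Φ.le_opNorm _)
        _ ≤ ‖Φ‖ * C * √S := by rw [mul_assoc]; gcongr; exact hv n _
    have hS0 : 0 ≤ S := sum_nonneg fun _ _ => sq_nonneg _
    nlinarith [Real.sq_sqrt hS0, Real.sqrt_nonneg S, sq_nonneg (√S - ‖Φ‖ * C)]
  have hsq := (summable_of_sum_range_le (fun j => sq_nonneg (Φ (v j))) hbdd).tendsto_atTop_zero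
  exact (tendsto_zero_iff_abs_tendsto_zero _).2 <| by
    simpa [Real.sqrt_sq_eq_abs, Function.comp_def] using hsq.sqrt

theorem exists_norm_le_one_le_rademacher_mul {z : ℕ → W} {r s : ℝ}
    (hind : ∀ P Q : Finset ℕ, Disjoint P Q → ∃ h : W →L[ℝ] ℝ, ‖h‖ ≤ 1 ∧
      (∀ i ∈ P, s < h (z i)) ∧ ∀ i ∈ Q, h (z i) < r) (F σ : Finset ℕ) :
    ∃ c : W →L[ℝ] ℝ, ‖c‖ ≤ 1 ∧ ∀ i ∈ F, (s - r) / 2 ≤ rademacher σ i * c (z i) := by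
  obtain ⟨h, hh, hhs, hhr⟩ := hind (F ∩ σ) (F \ σ) (disjoint_sdiff_inter F σ).symm
  obtain ⟨h', hh', hh's, hh'r⟩ := hind (F \ σ) (F ∩ σ) (disjoint_sdiff_inter F σ)
  refine ⟨(1 / 2 : ℝ) • (h - h'), ?_, fun i hi => ?_⟩
  · rw [norm_smul, Real.norm_of_nonneg (by norm_num)]
    linarith [norm_sub_le h h']
  · by_cases hiσ : i ∈ σ
    · have his := hhs i (mem_inter.2 ⟨hi, hiσ⟩)
      have h'ir := hh'r i (mem_inter.2 ⟨hi, hiσ⟩)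
      simp only [rademacher, if_pos hiσ, smul_apply, sub_apply, smul_eq_mul]
      linarith
    · have hir := hhr i (mem_sdiff.2 ⟨hi, hiσ⟩)
      have h'is := hh's i (mem_sdiff.2 ⟨hi, hiσ⟩)
      simp only [rademacher, if_neg hiσ, smul_apply, sub_apply, smul_eq_mul]
      linarith

theorem exists_weakConvTo_zero_of_independent (z : ℕ → W) {r s : ℝ}
    (hind : ∀ P Q : Finset ℕ, Disjoint P Q → ∃ h : W →L[ℝ] ℝ, ‖h‖ ≤ 1 ∧
      (∀ i ∈ P, s < h (z i)) ∧ ∀ i ∈ Q, h (z i) < r) :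
    ∃ g : ℕ → W →L[ℝ] ℝ, WeakConvTo g 0 ∧ ∀ j, (s - r) / 2 ≤ g j (z j) := by
  choose c hc_norm hc using fun N => exists_norm_le_one_le_rademacher_mul hind (range N)
  set g : ℕ → ℕ → WeakDual ℝ W := fun N j => StrongDual.toWeakDual (rademacherAverage (c N) N j)
  -- Banach–Alaoglu: the functionals `g N` have a weak-* cluster point `G` as `N → ∞`
  obtain ⟨G, -, hG⟩ := (isCompact_univ_pi fun _ =>
    WeakDual.isCompact_closedBall (0 : StrongDual ℝ W) 1).exists_mapClusterPt (f := atTop) (u := g)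
    (tendsto_principal.2 (.of_forall fun N j _ => by
      simpa [g] using norm_rademacherAverage_le (hc_norm N) N j))
  refine ⟨fun j => WeakDual.toStrongDual (G j), weakConvTo_zero_of_norm_sum_smul_le (C := 1)
    fun n a => ?_, fun j => ?_⟩
  · have hcont : Continuous fun G : ℕ → WeakDual ℝ W => ∑ j ∈ range n, a j • G j :=
      continuous_finsetSum _ fun j _ => (continuous_apply j).const_smul (a j)
    have hclosed := (WeakDual.isClosed_closedBall 0 √(∑ j ∈ range n, a j ^ 2)).preimage hcont
    simpa using hclosed.mem_of_mapClusterPt hG <| eventually_atTop.2 ⟨n, fun N hN => by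
      simpa [g] using norm_sum_smul_rademacherAverage_le (hc_norm N) (range_subset_range.2 hN) a⟩
  · have hclosed : IsClosed {G : ℕ → WeakDual ℝ W | (s - r) / 2 ≤ G j (z j)} :=
      isClosed_le continuous_const ((WeakDual.eval_continuous (z j)).comp (continuous_apply j))
    exact hclosed.mem_of_mapClusterPt hG <| eventually_atTop.2 ⟨j + 1, fun N hN =>
      le_rademacherAverage_apply fun σ => hc N σ j (mem_range.2 hN)⟩

end DualSequence

theorem totallyBounded_of_forall_exists_cauchySeq {α : Type*} [UniformSpace α] {s : Set α}
    (h : ∀ u : ℕ → α, (∀ n, u n ∈ s) → ∃ φ : ℕ → ℕ, StrictMono φ ∧ CauchySeq (u ∘ φ)) :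
    TotallyBounded s := by
  intro V V_in
  by_contra! hV
  obtain ⟨u, u_in, hu⟩ : ∃ u : ℕ → α, (∀ n, u n ∈ s) ∧
      ∀ n m, m < n → u m ∉ UniformSpace.ball (u n) V := by
    simp only [not_subset, mem_iUnion₂, not_exists, exists_prop] at hV
    simpa only [forall_and, forall_mem_image, not_and] using! seq_of_forall_finite_exists hV
  obtain ⟨φ, hφ, huφ⟩ := h u u_in
  obtain ⟨N, hN⟩ := huφ.mem_entourage V_in
  exact hu (φ (N + 1)) (φ N) (hφ N.lt_succ_self) (hN (N + 1) N N.le_succ le_rfl)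

section Schur

variable {E : Type*} [NormedAddCommGroup E] [NormedSpace ℝ E]

theorem WeaklyCauchySeq.map {F : Type*} [NormedAddCommGroup F] [NormedSpace ℝ F] {x : ℕ → E}
    (hx : WeaklyCauchySeq x) (T : E →L[ℝ] F) : WeaklyCauchySeq fun n => T (x n) :=
  fun f => hx (f.comp T)

theorem SchurProperty.cauchySeq (hE : SchurProperty E) {x : ℕ → E} (hx : WeaklyCauchySeq x) :
    CauchySeq x := by
  rw [cauchySeq_iff_tendsto_dist_atTop_0, tendsto_iff_seq_tendsto]
  intro p hp
  rw [← prod_atTop_atTop_eq] at hp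
  have hweak : WeakConvTo (fun k => x (p k).1 - x (p k).2) 0 := fun f => by
    obtain ⟨L, hL⟩ := hx f
    simpa using (hL.comp (tendsto_fst.comp hp)).sub (hL.comp (tendsto_snd.comp hp))
  simpa [Function.comp_def, dist_eq_norm] using (hE _ 0 hweak).norm

theorem almostReflexive_of_schurProperty_dual (hE : SchurProperty (E →L[ℝ] ℝ)) :
    AlmostReflexive E := by
  intro x hx
  obtain ⟨φ, hφ, hcauchy | ⟨r, s, hrs, hind⟩⟩ :=
    exists_strictMono_weaklyCauchySeq_or_independent x hx
  · exact ⟨φ, hφ, hcauchy⟩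
  obtain ⟨g, hg0, hg⟩ := exists_weakConvTo_zero_of_independent (fun n => x (φ n)) hind
  obtain ⟨R, hR⟩ := hx
  have hlim : Tendsto (fun j => g j (x (φ j))) atTop (𝓝 0) := by
    refine squeeze_zero_norm (fun j => ((g j).le_opNorm _).trans ?_)
      (by simpa using (hE g 0 hg0).norm.mul_const R)
    exact mul_le_mul_of_nonneg_left (hR _) (norm_nonneg _)
  obtain ⟨j, hj⟩ := (hlim.eventually (gt_mem_nhds (by linarith : 0 < (s - r) / 2))).exists
  linarith [hg j]

end Schur

variable {X : Type*} [NormedAddCommGroup X] [NormedSpace ℝ X] [CompleteSpace X]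
variable {Y : Type*} [NormedAddCommGroup Y] [NormedSpace ℝ Y] [CompleteSpace Y]

/-- If the dual of `X` and `Y` both have the Schur property, then every bounded linear
operator `T : X → Y` is compact. -/
theorem stmt2 (hX : SchurProperty (X →L[ℝ] ℝ)) (hY : SchurProperty Y) (T : X →L[ℝ] Y) :
    CompactOp T := by
  refine (TotallyBounded.closure ?_).isCompact_of_isClosed isClosed_closure
  refine totallyBounded_of_forall_exists_cauchySeq fun y hy => ?_
  choose x hx hxy using hy
  obtain ⟨φ, hφ, hφx⟩ := almostReflexive_of_schurProperty_dual hX x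
    ⟨1, fun n => mem_closedBall_zero_iff.1 (hx n)⟩
  refine ⟨φ, hφ, ?_⟩
  simpa only [Function.comp_def, ← hxy] using hY.cauchySeq (hφx.map T)
end

section
/- Let X be a Banach space over ℝ that is a Grothendieck space and has the Dunford–Pettis property, and let Y be a separable Banach space over ℝ. Then every bounded linear operator T : X → Y is strictly singular. -/
open Filter Topology

/-!
For a bounded sequence `xₙ` in `X` and an ultrafilter `U`, the `U`-limit `F ∈ X''` of the `xₙ`
composed with the transpose of `T` is a weak*-sequentially continuous functional on `Y'`: this is
where the Grothendieck property enters. On the dual of a separable space such a functional is an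
evaluation, so `T xₙ` has a weak limit along every ultrafilter, and a countable norming family of
functionals on `Y` turns these limits into a weakly convergent subsequence: `T` is weakly compact.
By the Dunford–Pettis property `T` is then also completely continuous. On a closed subspace on
which `T` is bounded below, a bounded sequence therefore has a subsequence converging weakly, hence
in norm; the unit ball of the subspace is compact and the subspace finite-dimensional.
-/

section OperatorClasses

variable {E : Type*} [NormedAddCommGroup E] [NormedSpace ℝ E]
variable {F : Type*} [NormedAddCommGroup F] [NormedSpace ℝ F]
variable {G : Type*} [NormedAddCommGroup G] [NormedSpace ℝ G]

theorem WeakConvTo.map {x : ℕ → E} {x₀ : E} (h : WeakConvTo x x₀) (S : E →L[ℝ] F) :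
    WeakConvTo (fun n => S (x n)) (S x₀) :=
  fun f => h (f.comp S)

theorem WeakConvTo.mem_of_convex_of_isClosed {x : ℕ → E} {x₀ : E} (h : WeakConvTo x x₀)
    {s : Set E} (hs : Convex ℝ s) (hsc : IsClosed s) (hx : ∀ n, x n ∈ s) : x₀ ∈ s := by
  by_contra hx₀
  obtain ⟨f, u, hfs, hfx₀⟩ := geometric_hahn_banach_closed_point hs hsc hx₀
  exact (le_of_tendsto (h f) (Eventually.of_forall fun n => (hfs _ (hx n)).le)).not_gt hfx₀

theorem WeaklyCompactOp.clm_comp {T : E →L[ℝ] F} (hT : WeaklyCompactOp T) (S : F →L[ℝ] G) :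
    WeaklyCompactOp (S.comp T) := by
  intro x hx
  obtain ⟨φ, hφ, y, hy⟩ := hT x hx
  exact ⟨φ, hφ, S y, hy.map S⟩

theorem WeaklyCompactOp.comp_clm {T : F →L[ℝ] G} (hT : WeaklyCompactOp T) (S : E →L[ℝ] F) :
    WeaklyCompactOp (T.comp S) := by
  rintro x ⟨C, hC⟩
  exact hT (fun n => S (x n)) ⟨‖S‖ * C, fun n =>
    (S.le_opNorm _).trans (mul_le_mul_of_nonneg_left (hC n) (norm_nonneg S))⟩

theorem CompletelyContinuousOp.comp_clm {T : F →L[ℝ] G} (hT : CompletelyContinuousOp T)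
    (S : E →L[ℝ] F) : CompletelyContinuousOp (T.comp S) :=
  fun _ _ h => hT _ _ (h.map S)

theorem CompletelyContinuousOp.of_linearIsometry_comp [CompleteSpace F] {T : E →L[ℝ] F}
    (j : F →ₗᵢ[ℝ] G) (h : CompletelyContinuousOp (j.toContinuousLinearMap.comp T)) :
    CompletelyContinuousOp T := by
  intro x x₀ hx
  obtain ⟨z, hz⟩ := h x x₀ hx
  exact cauchySeq_tendsto_of_complete
    (j.isometry.isUniformInducing.cauchy_map_iff.1 hz.cauchySeq)

theorem exists_dual_comp_eq_of_antilipschitz {S : E →L[ℝ] F} {K : NNReal}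
    (hS : AntilipschitzWith K S) (f : StrongDual ℝ E) :
    ∃ g : StrongDual ℝ F, g.comp S = f := by
  let e₀ := LinearEquiv.ofInjective S.toLinearMap hS.injective
  have he₀ : ∀ v, S (e₀.symm v) = v := LinearEquiv.ofInjective_symm_apply _
  let e := e₀.toContinuousLinearEquivOfBounds ‖S‖ K S.le_opNorm
    fun v => by simpa [he₀] using S.bound_of_antilipschitz hS (e₀.symm v)
  obtain ⟨g, hg, -⟩ := exists_extension_norm_eq _ (f.comp e.symm.toContinuousLinearMap)
  exact ⟨g, ContinuousLinearMap.ext fun x => (hg (e x)).trans (by simp)⟩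

theorem WeakConvTo.of_antilipschitz {S : E →L[ℝ] F} {K : NNReal} (hS : AntilipschitzWith K S)
    {x : ℕ → E} {x₀ : E} (h : WeakConvTo (fun n => S (x n)) (S x₀)) : WeakConvTo x x₀ := by
  intro f
  obtain ⟨g, rfl⟩ := exists_dual_comp_eq_of_antilipschitz hS f
  exact h g

theorem finiteDimensional_of_antilipschitz_of_weaklyCompactOp_of_completelyContinuousOp
    [CompleteSpace E] {S : E →L[ℝ] F} {K : NNReal} (hS : AntilipschitzWith K S)
    (hW : WeaklyCompactOp S) (hC : CompletelyContinuousOp S) :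
    FiniteDimensional ℝ E := by
  refine FiniteDimensional.of_isCompact_closedBall₀ ℝ one_pos (IsSeqCompact.isCompact ?_)
  intro u hu
  obtain ⟨φ, hφ, y, hy⟩ := hW u ⟨1, fun n => by simpa using hu n⟩
  obtain ⟨x₀, rfl⟩ : y ∈ Set.range S :=
    hy.mem_of_convex_of_isClosed (LinearMap.range S.toLinearMap).convex
      (hS.isClosed_range S.uniformContinuous) fun n => Set.mem_range_self _
  obtain ⟨z, hz⟩ := hC _ _ (hy.of_antilipschitz hS)
  have : CauchySeq (u ∘ φ) :=
    (hS.isUniformInducing S.uniformContinuous).cauchy_map_iff.1 hz.cauchySeq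
  obtain ⟨x, hx⟩ := cauchySeq_tendsto_of_complete this
  exact ⟨x, Metric.isClosed_closedBall.mem_of_tendsto hx (Eventually.of_forall fun n => hu _),
    φ, hφ, hx⟩

theorem StrictlySingular.of_weaklyCompactOp_of_completelyContinuousOp [CompleteSpace E]
    {T : E →L[ℝ] F} (hW : WeaklyCompactOp T) (hC : CompletelyContinuousOp T) :
    StrictlySingular T := by
  rintro X₀ hX₀ hinf ⟨c, hc, hbound⟩
  have := hX₀.completeSpace_coe
  refine hinf (finiteDimensional_of_antilipschitz_of_weaklyCompactOp_of_completelyContinuousOp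
    (S := T.comp X₀.subtypeL) (K := Real.toNNReal c⁻¹) ?_ (hW.comp_clm _) (hC.comp_clm _))
  refine ContinuousLinearMap.antilipschitz_of_bound _ fun x => ?_
  rw [Real.coe_toNNReal _ (inv_nonneg.2 hc.le), ← div_eq_inv_mul, le_div_iff₀ hc, mul_comm]
  exact hbound x x.2

end OperatorClasses

section DualOfSeparable

theorem tendsto_apply_of_norm_le_of_dense {ι E F : Type*} [NormedAddCommGroup E]
    [NormedSpace ℝ E] [NormedAddCommGroup F] [NormedSpace ℝ F] {l : Filter ι}
    {g : ι → E →L[ℝ] F} {g₀ : E →L[ℝ] F} {C : ℝ} (hC : ∀ i, ‖g i‖ ≤ C) {s : Set E}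
    (hs : Dense s) (h : ∀ y ∈ s, Tendsto (fun i => g i y) l (𝓝 (g₀ y))) (y : E) :
    Tendsto (fun i => g i y) l (𝓝 (g₀ y)) := by
  have hequi : Equicontinuous fun i => ⇑(g i) :=
    ((NormedSpace.equicontinuous_TFAE g).out 5 1).1 (⟨C, hC⟩ : ∃ C, ∀ i, ‖g i‖ ≤ C)
  exact (hequi.isClosed_setOfPred_tendsto g₀.continuous).closure_subset_iff.2 h (hs y)

theorem exists_norm_sub_sum_le_of_forall_ker {E ι : Type*} [NormedAddCommGroup E]
    [NormedSpace ℝ E] [Fintype ι] (Λ : StrongDual ℝ E) (L : ι → StrongDual ℝ E) {ε : ℝ}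
    (hε : 0 ≤ ε) (h : ∀ g, (∀ k, L k g = 0) → ‖Λ g‖ ≤ ε * ‖g‖) :
    ∃ c : ι → ℝ, ‖Λ - ∑ k, c k • L k‖ ≤ ε := by
  set N : Subspace ℝ E := ⨅ k, LinearMap.ker (L k : E →ₗ[ℝ] ℝ)
  have hN : ∀ g, g ∈ N ↔ ∀ k, L k g = 0 := by simp [N]
  obtain ⟨Λ', hΛ', hnorm⟩ := exists_extension_norm_eq N (Λ.comp N.subtypeL)
  have hker : N ≤ LinearMap.ker ((Λ - Λ' : StrongDual ℝ E) : E →ₗ[ℝ] ℝ) := fun g hg => by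
    simpa [sub_eq_zero] using (hΛ' ⟨g, hg⟩).symm
  obtain ⟨c, hc⟩ :=
    (Submodule.mem_span_range_iff_exists_fun ℝ).1 (mem_span_of_iInf_ker_le_ker hker)
  have hc' : ∑ k, c k • L k = Λ - Λ' := ContinuousLinearMap.coe_injective (by simpa using hc)
  refine ⟨c, ?_⟩
  rw [hc', sub_sub_cancel, hnorm]
  exact ContinuousLinearMap.opNorm_le_bound _ hε fun g => h g ((hN g).1 g.2)

variable {Y : Type*} [NormedAddCommGroup Y] [NormedSpace ℝ Y]

def WeakStarSeqContinuous (Λ : StrongDual ℝ (StrongDual ℝ Y)) : Prop :=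
  ∀ (g : ℕ → StrongDual ℝ Y) (g₀ : StrongDual ℝ Y),
    (∀ y, Tendsto (fun m => g m y) atTop (𝓝 (g₀ y))) → Tendsto (fun m => Λ (g m)) atTop (𝓝 (Λ g₀))

theorem WeakStarSeqContinuous.exists_forall_norm_le {Λ : StrongDual ℝ (StrongDual ℝ Y)}
    (hΛ : WeakStarSeqContinuous Λ) {z : ℕ → Y} (hz : DenseRange z) {ε : ℝ} (hε : 0 < ε) :
    ∃ m, ∀ g : StrongDual ℝ Y, (∀ k < m, g (z k) = 0) → ‖Λ g‖ ≤ ε * ‖g‖ := by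
  by_contra! hcon
  choose g hgz hgΛ using hcon
  have hg0 : ∀ m, g m ≠ 0 := fun m hm => by simpa [hm] using hgΛ m
  set h : ℕ → StrongDual ℝ Y := fun m => ‖g m‖⁻¹ • g m
  have hh1 : ∀ m, ‖h m‖ ≤ 1 := fun m => by
    simp [h, norm_smul, inv_mul_cancel₀ (norm_ne_zero_iff.2 (hg0 m))]
  have hhΛ : ∀ m, ε < ‖Λ (h m)‖ := fun m => by
    have hpos := norm_pos_iff.2 (hg0 m)
    rw [map_smul, norm_smul, norm_inv, norm_norm, ← div_eq_inv_mul, lt_div_iff₀ hpos]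
    exact hgΛ m
  have hh0 : ∀ y, Tendsto (fun m => h m y) atTop (𝓝 ((0 : StrongDual ℝ Y) y)) := by
    refine tendsto_apply_of_norm_le_of_dense hh1 hz ?_
    rintro - ⟨k, rfl⟩
    refine tendsto_const_nhds.congr' ((eventually_gt_atTop k).mono fun m hm => ?_)
    simp [h, hgz m k hm]
  obtain ⟨m, hm⟩ := ((hΛ h 0 hh0).norm.eventually (gt_mem_nhds (by simpa using hε))).exists
  exact (hhΛ m).not_gt hm

theorem WeakStarSeqContinuous.exists_eq_apply [TopologicalSpace.SeparableSpace Y] [CompleteSpace Y]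
    {Λ : StrongDual ℝ (StrongDual ℝ Y)} (hΛ : WeakStarSeqContinuous Λ) :
    ∃ y : Y, ∀ g : StrongDual ℝ Y, Λ g = g y := by
  let ι := NormedSpace.inclusionInDoubleDual ℝ Y
  have hclosed : IsClosed (Set.range ι) :=
    (Isometry.isClosedEmbedding (γ := StrongDual ℝ (StrongDual ℝ Y))
      (NormedSpace.inclusionInDoubleDualLi ℝ).isometry).isClosed_range
  suffices Λ ∈ closure (Set.range ι) by
    obtain ⟨y, rfl⟩ := hclosed.closure_subset this
    exact ⟨y, fun g => rfl⟩
  obtain ⟨z, hz⟩ := TopologicalSpace.exists_dense_seq Y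
  refine (Metric.mem_closure_iff (α := StrongDual ℝ (StrongDual ℝ Y))).2 fun ε hε => ?_
  obtain ⟨m, hm⟩ := hΛ.exists_forall_norm_le hz (half_pos hε)
  obtain ⟨c, hc⟩ := exists_norm_sub_sum_le_of_forall_ker Λ (fun k : Fin m => ι (z k))
    (half_pos hε).le fun g hg => hm g fun k hk => hg ⟨k, hk⟩
  refine ⟨ι (∑ k, c k • z k), Set.mem_range_self _, ?_⟩
  rw [dist_eq_norm (E := StrongDual ℝ (StrongDual ℝ Y))]
  simpa [ι] using hc.trans_lt (half_lt_self hε)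

end DualOfSeparable

theorem exists_tendsto_ultrafilter_bidual {ι E : Type*} [NormedAddCommGroup E] [NormedSpace ℝ E]
    {u : ι → E} {C : ℝ} (hu : ∀ i, ‖u i‖ ≤ C) (U : Ultrafilter ι) :
    ∃ F : StrongDual ℝ (StrongDual ℝ E), ∀ f : StrongDual ℝ E,
      Tendsto (fun i => f (u i)) U (𝓝 (F f)) := by
  let v : ι → WeakDual ℝ (StrongDual ℝ E) := fun i =>
    StrongDual.toWeakDual (NormedSpace.inclusionInDoubleDual ℝ E (u i))
  have hv : ∀ i, v i ∈ WeakDual.toStrongDual ⁻¹' Metric.closedBall 0 C := fun i =>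
    (mem_closedBall_zero_iff (E := StrongDual ℝ (StrongDual ℝ E))).2
      ((NormedSpace.double_dual_bound ℝ E (u i)).trans (hu i))
  obtain ⟨F, -, hF⟩ := (WeakDual.isCompact_closedBall 0 C).ultrafilter_le_nhds (U.map v)
    (le_principal_iff.2 (mem_map.2 (univ_mem' hv)))
  exact ⟨WeakDual.toStrongDual F, fun f => ((WeakDual.eval_continuous f).tendsto F).comp hF⟩

section Separable

open scoped ENNReal

variable (Y : Type*) [NormedAddCommGroup Y] [NormedSpace ℝ Y] [TopologicalSpace.SeparableSpace Y]

theorem exists_seq_dual_isLUB_abs :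
    ∃ g : ℕ → StrongDual ℝ Y, ∀ y, IsLUB (Set.range fun k => |g k y|) ‖y‖ := by
  obtain ⟨z, hz⟩ := TopologicalSpace.exists_dense_seq Y
  choose g hg1 hgz using fun k => exists_dual_vector'' ℝ (z k)
  have hle : ∀ k y, |g k y| ≤ ‖y‖ := fun k y =>
    (g k).le_of_opNorm_le (hg1 k) y |>.trans_eq (one_mul _)
  refine ⟨g, fun y => ⟨Set.forall_mem_range.2 fun k => hle k y, fun b hb => ?_⟩⟩
  refine le_of_forall_pos_lt_add fun ε hε => ?_
  obtain ⟨k, hk⟩ := Metric.denseRange_iff.1 hz y (ε / 2) (half_pos hε)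
  rw [dist_eq_norm] at hk
  have hzk : ‖z k‖ ≤ |g k y| + ‖y - z k‖ := by
    calc ‖z k‖ = g k y - g k (y - z k) := by simp [hgz]
      _ ≤ |g k y| + |g k (y - z k)| := by
          linarith [le_abs_self (g k y), neg_abs_le (g k (y - z k))]
      _ ≤ |g k y| + ‖y - z k‖ := by linarith [hle k (y - z k)]
  calc ‖y‖ ≤ ‖z k‖ + ‖y - z k‖ := norm_le_norm_add_norm_sub' y (z k)
    _ ≤ b + 2 * ‖y - z k‖ := by linarith [hb ⟨k, rfl⟩]
    _ < b + ε := by linarith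

theorem exists_linearIsometry_lpInfty : Nonempty (Y →ₗᵢ[ℝ] lp (fun _ : ℕ => ℝ) ∞) := by
  obtain ⟨g, hg⟩ := exists_seq_dual_isLUB_abs Y
  have hmem : ∀ y, Memℓp (fun k => g k y) ∞ := fun y => memℓp_infty ⟨‖y‖, (hg y).1⟩
  exact ⟨{ toFun := fun y => ⟨fun k => g k y, hmem y⟩
           map_add' := fun y₁ y₂ => lp.ext (funext fun k => map_add (g k) y₁ y₂)
           map_smul' := fun c y => lp.ext (funext fun k => map_smul (g k) c y)
           norm_map' := fun y => (lp.isLUB_norm _).unique (hg y) }⟩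

variable {Y}

theorem exists_subseq_weakConvTo_of_forall_ultrafilter {y : ℕ → Y} {C : ℝ}
    (hy : ∀ n, ‖y n‖ ≤ C)
    (hU : ∀ U : Ultrafilter ℕ, ∃ y₀ : Y, ∀ g : StrongDual ℝ Y,
      Tendsto (fun n => g (y n)) U (𝓝 (g y₀))) :
    ∃ φ : ℕ → ℕ, StrictMono φ ∧ ∃ y₀, WeakConvTo (y ∘ φ) y₀ := by
  obtain ⟨g, hg⟩ := exists_seq_dual_isLUB_abs Y
  have hsep : ∀ y₁ y₂, (∀ k, g k y₁ = g k y₂) → y₁ = y₂ := fun y₁ y₂ h => by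
    have h0 : IsLUB (Set.range fun k => |g k (y₁ - y₂)|) 0 := by simp [h]
    rw [← sub_eq_zero, ← norm_eq_zero]
    exact (hg _).unique h0
  have hbox : ∀ n, (fun k => g k (y n)) ∈ Set.univ.pi fun _ => Set.Icc (-C) C :=
    fun n k _ => abs_le.1 (((hg (y n)).1 ⟨k, rfl⟩).trans (hy n))
  obtain ⟨b, -, φ, hφ, hb⟩ := (isCompact_univ_pi fun _ => isCompact_Icc).tendsto_subseq hbox
  choose yU hyU using fun U : Ultrafilter ℕ => hU (U.map φ)
  have hcoord : ∀ U : Ultrafilter ℕ, (U : Filter ℕ) ≤ atTop → ∀ k, g k (yU U) = b k :=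
    fun U hUle k => tendsto_nhds_unique (tendsto_map'_iff.1 (hyU U (g k))) ((tendsto_pi_nhds.1 hb k).mono_left hUle)
  refine ⟨φ, hφ, yU (Ultrafilter.of atTop), fun f =>
    (tendsto_iff_ultrafilter _ _ _).2 fun U hUle => ?_⟩
  rw [← hsep _ _ fun k => (hcoord U hUle k).trans (hcoord _ (Ultrafilter.of_le _) k).symm]
  exact tendsto_map'_iff.1 (hyU U f)

end Separable

section Grothendieck

variable {X : Type*} [NormedAddCommGroup X] [NormedSpace ℝ X]
variable {Y : Type*} [NormedAddCommGroup Y] [NormedSpace ℝ Y] [TopologicalSpace.SeparableSpace Y]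
  [CompleteSpace Y]

theorem GrothendieckSpace.exists_tendsto_ultrafilter (hX : GrothendieckSpace X)
    (T : X →L[ℝ] Y) {ι : Type*} {x : ι → X} {C : ℝ} (hx : ∀ i, ‖x i‖ ≤ C) (U : Ultrafilter ι) :
    ∃ y : Y, ∀ g : StrongDual ℝ Y, Tendsto (fun i => g (T (x i))) U (𝓝 (g y)) := by
  obtain ⟨F, hF⟩ := exists_tendsto_ultrafilter_bidual hx U
  let Λ : StrongDual ℝ (StrongDual ℝ Y) := F.comp ((ContinuousLinearMap.compL ℝ X Y ℝ).flip T)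
  have hΛ : WeakStarSeqContinuous Λ := fun g g₀ hg =>
    hX (fun m => (g m).comp T) (g₀.comp T) (fun x => hg (T x)) F
  obtain ⟨y, hy⟩ := hΛ.exists_eq_apply
  exact ⟨y, fun g => hy g ▸ hF (g.comp T)⟩

theorem GrothendieckSpace.weaklyCompactOp (hX : GrothendieckSpace X) (T : X →L[ℝ] Y) :
    WeaklyCompactOp T := by
  rintro x ⟨C, hC⟩
  exact exists_subseq_weakConvTo_of_forall_ultrafilter (fun n => T.le_opNorm_of_le (hC n))
    fun U => hX.exists_tendsto_ultrafilter T hC U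

end Grothendieck

section DunfordPettis

open scoped ENNReal

universe u v

/-- `DunfordPettisProp.{u, v}` only speaks about targets in `Type v`; a separable space is moved
there through its isometric copy in `ℓ∞`. -/
theorem DunfordPettisProp.completelyContinuousOp {X : Type u} [NormedAddCommGroup X]
    [NormedSpace ℝ X] (hX : DunfordPettisProp.{u, v} X) {Y : Type*} [NormedAddCommGroup Y]
    [NormedSpace ℝ Y] [TopologicalSpace.SeparableSpace Y] [CompleteSpace Y] {T : X →L[ℝ] Y}
    (hT : WeaklyCompactOp T) : CompletelyContinuousOp T := by
  obtain ⟨q⟩ := exists_linearIsometry_lpInfty Y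
  let j : Y →ₗᵢ[ℝ] ULift.{v} (lp (fun _ : ℕ => ℝ) ∞) :=
    (LinearIsometryEquiv.ulift ℝ _).symm.toLinearIsometry.comp q
  exact CompletelyContinuousOp.of_linearIsometry_comp j (hX _ _ (hT.clm_comp _))

end DunfordPettis

variable {X : Type*} [NormedAddCommGroup X] [NormedSpace ℝ X] [CompleteSpace X]
variable {Y : Type*} [NormedAddCommGroup Y] [NormedSpace ℝ Y] [CompleteSpace Y]

/-- If `X` is a Grothendieck space with the Dunford–Pettis property and `Y` is separable, then
every bounded linear operator `T : X → Y` is strictly singular. -/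
theorem stmt13 [TopologicalSpace.SeparableSpace Y] (hX : GrothendieckSpace X)
    (hX' : DunfordPettisProp X) (T : X →L[ℝ] Y) : StrictlySingular T := by
  have hW : WeaklyCompactOp T := hX.weaklyCompactOp T
  exact .of_weaklyCompactOp_of_completelyContinuousOp hW (hX'.completelyContinuousOp hW)
end
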